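/- With Δ, L, C, u, v as above (triangle with vertices (0,0),(i,0),(i,j), segment L from (0,0) to (i,j), C the set of admissible convex polygons): for every real number 0 < x < 1, if each lattice point interior to Δ is independently selected with probability x, and P is the convex hull of the selected points together with (0,0) and (i,j), then P lies in C, and the probability that the resulting convex hull equals a given Q ∈ C is exactly x^{v(Q)−2} (1−x)^{u(Q)}. -/

import Mathlib

/-!
The extreme points of the hull of a finite set `S` form the unique subset of `S` in convex
position with the same hull (Krein–Milman, and hulls of finite sets are closed). If `S` consists
of `(0,0)`, `(i,j)` and lattice points interior to `Δ`, each corner is separated from the rest of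
`S` by a line, so it is extreme; hence the hull of `S` is that of a polygon in `C`.

For a fixed `Q ∈ C`, the hull of the selection `T` together with the corners is `Q` exactly when
`A ⊆ T ⊆ B`, where `A` is the set of vertices of `Q` other than the corners and `B` the set of
interior lattice points lying in `Q`. Summing the weights over this interval of subsets gives
`x ^ #A * (1 - x) ^ (#I - #B)` by the binomial theorem.
-/

open scoped Classical

open Finset in
theorem Finset.sum_filter_powerset_subset_subset {α K : Type*} [CommRing K] {A B U : Finset α}
    [DecidablePred fun T => A ⊆ T ∧ T ⊆ B] (hAB : A ⊆ B) (hBU : B ⊆ U) (x : K) :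
    ∑ T ∈ U.powerset.filter (fun T => A ⊆ T ∧ T ⊆ B), x ^ #T * (1 - x) ^ (#U - #T)
      = x ^ #A * (1 - x) ^ (#U - #B) := by
  have hIcc : U.powerset.filter (fun T => A ⊆ T ∧ T ⊆ B) = Icc A B := by
    ext T
    simp only [mem_filter, mem_powerset, mem_Icc]
    exact ⟨fun h => h.2, fun h => ⟨h.2.trans hBU, h⟩⟩
  have hdisj : ∀ R ∈ (B \ A).powerset, Disjoint A R := fun R hR =>
    disjoint_sdiff.mono_right (mem_powerset.1 hR)
  have hinj : Set.InjOn (A ∪ ·) ((B \ A).powerset : Set (Finset α)) := fun R hR R' hR' h => by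
    rw [← union_sdiff_cancel_left (hdisj R hR), ← union_sdiff_cancel_left (hdisj R' hR')]
    exact congrArg (· \ A) h
  have hterm : ∀ R ∈ (B \ A).powerset, x ^ #(A ∪ R) * (1 - x) ^ (#U - #(A ∪ R))
      = x ^ #A * (1 - x) ^ (#U - #B) * (x ^ #R * (1 - x) ^ (#(B \ A) - #R)) := fun R hR => by
    have hRBA := card_le_card (mem_powerset.1 hR)
    have hBU' := card_le_card hBU
    have hAB' := card_le_card hAB
    rw [card_sdiff_of_subset hAB] at hRBA ⊢
    rw [card_union_of_disjoint (hdisj R hR),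
      show #U - (#A + #R) = (#U - #B) + (#B - #A - #R) by omega]
    ring
  rw [hIcc, Icc_eq_image_powerset hAB, sum_image hinj, sum_congr rfl hterm, ← mul_sum,
    sum_pow_mul_eq_add_pow, add_sub_cancel, one_pow, mul_one]

section LocallyConvex

variable {E : Type*} [AddCommGroup E] [Module ℝ E] [TopologicalSpace E] [T2Space E]
  [IsTopologicalAddGroup E] [ContinuousSMul ℝ E] [LocallyConvexSpace ℝ E] {A : Set E}

theorem Set.Finite.convexHull_extremePoints_convexHull (hA : A.Finite) :
    convexHull ℝ ((convexHull ℝ A).extremePoints ℝ) = convexHull ℝ A := by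
  have hKM := closure_convexHull_extremePoints (hA.isCompact_convexHull ℝ) (convex_convexHull ℝ A)
  rwa [((hA.subset extremePoints_convexHull_subset).isClosed_convexHull ℝ).closure_eq] at hKM

theorem Set.Finite.mem_extremePoints_convexHull (hA : A.Finite) {x : E} (hxA : x ∈ A)
    (hx : x ∉ convexHull ℝ (A \ {x})) : x ∈ (convexHull ℝ A).extremePoints ℝ := by
  -- otherwise all extreme points lie in `A \ {x}`, whose hull then contains `convexHull ℝ A`
  by_contra hext
  have hsub : (convexHull ℝ A).extremePoints ℝ ⊆ A \ {x} := fun y hy =>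
    ⟨extremePoints_convexHull_subset hy, fun hyx => hext (hyx ▸ hy)⟩
  apply hx (convexHull_mono hsub _)
  rw [hA.convexHull_extremePoints_convexHull]
  exact subset_convexHull ℝ A hxA

end LocallyConvex

theorem notMem_convexHull_of_forall_lt {E : Type*} [AddCommGroup E] [Module ℝ E]
    (φ : E →ₗ[ℝ] ℝ) {s : Set E} {x : E} (h : ∀ y ∈ s, φ y < φ x) : x ∉ convexHull ℝ s :=
  fun hx => lt_irrefl (φ x) (convexHull_min h (convex_halfSpace_lt φ.isLinear (φ x)) hx)

section Vertices

variable {α E : Type*} [AddCommGroup E] [Module ℝ E] {f : α → E}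

noncomputable def vertices (f : α → E) (S : Finset α) : Finset α :=
  S.filter fun v => f v ∈ (convexHull ℝ (f '' S)).extremePoints ℝ

theorem vertices_subset (S : Finset α) : vertices f S ⊆ S := Finset.filter_subset _ _

theorem image_vertices (S : Finset α) :
    f '' vertices f S = (convexHull ℝ (f '' S)).extremePoints ℝ := by
  ext y
  constructor
  · rintro ⟨v, hv, rfl⟩
    exact (Finset.mem_filter.1 hv).2
  · intro hy
    obtain ⟨v, hv, rfl⟩ := extremePoints_convexHull_subset hy
    exact ⟨v, Finset.mem_filter.2 ⟨hv, hy⟩, rfl⟩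

theorem notMem_convexHull_image_vertices_erase [DecidableEq α] (hf : f.Injective) (S : Finset α) :
    ∀ v ∈ vertices f S, f v ∉ convexHull ℝ (f '' ↑((vertices f S).erase v)) := by
  intro v hv
  rw [Finset.coe_erase, Set.image_sdiff hf, Set.image_singleton, image_vertices]
  exact convexIndependent_set_iff_notMem_convexHull_sdiff.1
    (convex_convexHull ℝ (f '' S)).convexIndependent_extremePoints _
    (image_vertices (f := f) S ▸ ⟨v, hv, rfl⟩)

variable [TopologicalSpace E] [T2Space E] [IsTopologicalAddGroup E] [ContinuousSMul ℝ E]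
  [LocallyConvexSpace ℝ E]

theorem convexHull_image_vertices (S : Finset α) :
    convexHull ℝ (f '' vertices f S) = convexHull ℝ (f '' S) := by
  rw [image_vertices, (S.finite_toSet.image f).convexHull_extremePoints_convexHull]

theorem mem_vertices_of_notMem_convexHull [DecidableEq α] {S : Finset α} {v : α} (hv : v ∈ S)
    (hvS : f v ∉ convexHull ℝ (f '' ↑(S.erase v))) : v ∈ vertices f S := by
  refine Finset.mem_filter.2 ⟨hv, (S.finite_toSet.image f).mem_extremePoints_convexHull
    ⟨v, hv, rfl⟩ fun h => hvS (convexHull_mono ?_ h)⟩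
  rintro _ ⟨⟨w, hw, rfl⟩, hwv⟩
  exact ⟨w, Finset.mem_erase.2 ⟨fun h => hwv (h ▸ rfl), hw⟩, rfl⟩

theorem convexHull_image_eq_iff [DecidableEq α] (hf : f.Injective) {Q : Finset α}
    (hQ : ∀ v ∈ Q, f v ∉ convexHull ℝ (f '' ↑(Q.erase v))) (S : Finset α) :
    convexHull ℝ (f '' S) = convexHull ℝ (f '' Q) ↔
      Q ⊆ S ∧ ∀ s ∈ S, f s ∈ convexHull ℝ (f '' Q) := by
  constructor
  · intro h
    -- the points of `Q` are extreme in the common hull, so they come from `S`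
    refine ⟨fun q hq => ?_, fun s hs => h ▸ subset_convexHull ℝ _ ⟨s, hs, rfl⟩⟩
    have hq : q ∈ vertices f Q := mem_vertices_of_notMem_convexHull hq (hQ q hq)
    rw [vertices, Finset.mem_filter, ← h, ← image_vertices] at hq
    obtain ⟨s, hs, hsq⟩ := hq.2
    exact hf hsq ▸ vertices_subset S hs
  · rintro ⟨hQS, hS⟩
    exact (convexHull_min (Set.image_subset_iff.2 hS) (convex_convexHull ℝ _)).antisymm
      (convexHull_mono (Set.image_mono hQS))

end Vertices

theorem LinearMap.interior_preimage {E F : Type*} [AddCommGroup E] [Module ℝ E] [TopologicalSpace E]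
    [IsTopologicalAddGroup E] [ContinuousSMul ℝ E] [T2Space E] [FiniteDimensional ℝ E]
    [AddCommGroup F] [Module ℝ F] [TopologicalSpace F]
    [IsTopologicalAddGroup F] [ContinuousSMul ℝ F] [T2Space F] [FiniteDimensional ℝ F]
    (φ : E →ₗ[ℝ] F) (hφ : Function.Surjective φ) (s : Set F) :
    interior (φ ⁻¹' s) = φ ⁻¹' interior s :=
  ((φ.isOpenMap_of_finiteDimensional hφ).preimage_interior_eq_interior_preimage
    φ.continuous_of_finiteDimensional s).symm

theorem convexHull_triangle {a b : ℝ} (ha : 0 < a) (hb : 0 < b) :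
    convexHull ℝ {((0 : ℝ), (0 : ℝ)), (a, 0), (a, b)} =
      {p : ℝ × ℝ | 0 ≤ p.2 ∧ p.1 ≤ a ∧ a * p.2 ≤ b * p.1} := by
  apply Set.Subset.antisymm
  · refine convexHull_min ?_ ?_
    · rintro p (rfl | rfl | rfl) <;> simp [ha.le, hb.le, mul_nonneg ha.le hb.le, mul_comm]
    · rintro p ⟨hp1, hp2, hp3⟩ q ⟨hq1, hq2, hq3⟩ s t hs ht hst
      simp only [Set.mem_ofPred_eq, Prod.fst_add, Prod.snd_add, Prod.smul_fst, Prod.smul_snd,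
        smul_eq_mul]
      refine ⟨by positivity, by nlinarith, by nlinarith⟩
  · rintro p ⟨h1, h2, h3⟩
    have hw : 0 ≤ p.1 / a - p.2 / b := by
      rw [sub_nonneg, div_le_div_iff₀ hb ha]; linarith
    have hmem := (convex_convexHull ℝ {((0 : ℝ), (0 : ℝ)), (a, 0), (a, b)}).sum_mem
      (t := Finset.univ) (w := ![1 - p.1 / a, p.1 / a - p.2 / b, p.2 / b])
      (z := ![(0, 0), (a, 0), (a, b)]) ?_ ?_ ?_
    · convert hmem using 1
      ext <;> simp [Fin.sum_univ_three] <;> field_simp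
      ring
    · intro k _
      fin_cases k
      exacts [by simpa [div_le_one ha] using h2, hw, div_nonneg h1 hb.le]
    · simp [Fin.sum_univ_three]
    · intro k _
      fin_cases k <;> exact subset_convexHull ℝ _ (by simp)

theorem interior_convexHull_triangle {a b : ℝ} (ha : 0 < a) (hb : 0 < b) :
    interior (convexHull ℝ {((0 : ℝ), (0 : ℝ)), (a, 0), (a, b)}) =
      {p : ℝ × ℝ | 0 < p.2 ∧ p.1 < a ∧ a * p.2 < b * p.1} := by
  let φ : ℝ × ℝ →ₗ[ℝ] ℝ := b • LinearMap.fst ℝ ℝ ℝ - a • LinearMap.snd ℝ ℝ ℝ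
  have hφ : Function.Surjective φ := fun t => ⟨(t / b, 0), by simp [φ, mul_div_cancel₀ t hb.ne']⟩
  have htri : {p : ℝ × ℝ | 0 ≤ p.2 ∧ p.1 ≤ a ∧ a * p.2 ≤ b * p.1} =
      LinearMap.snd ℝ ℝ ℝ ⁻¹' Set.Ici 0 ∩ LinearMap.fst ℝ ℝ ℝ ⁻¹' Set.Iic a ∩ φ ⁻¹' Set.Ici 0 := by
    ext p; simp [φ, and_assoc]
  rw [convexHull_triangle ha hb, htri, interior_inter, interior_inter,
    LinearMap.interior_preimage _ LinearMap.snd_surjective,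
    LinearMap.interior_preimage _ LinearMap.fst_surjective, LinearMap.interior_preimage _ hφ,
    interior_Ici, interior_Iic]
  ext p; simp [φ, and_assoc]

def latticeToReal (p : ℤ × ℤ) : ℝ × ℝ := (p.1, p.2)

theorem latticeToReal_injective : latticeToReal.Injective := fun p q h => by
  simpa [latticeToReal, Prod.ext_iff] using h

def InOpenTriangle (i j : ℕ) (p : ℤ × ℤ) : Prop :=
  0 < p.2 ∧ p.1 < (i : ℤ) ∧ (i : ℤ) * p.2 < (j : ℤ) * p.1

namespace InOpenTriangle

variable {i j : ℕ} {p : ℤ × ℤ}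

theorem fst_pos (hp : InOpenTriangle i j p) : 0 < p.1 := by
  obtain ⟨h1, -, h3⟩ := hp
  nlinarith

theorem snd_lt (hp : InOpenTriangle i j p) : p.2 < j := by
  obtain ⟨-, h2, h3⟩ := hp
  nlinarith

theorem mem_Icc (hp : InOpenTriangle i j p) :
    p ∈ Finset.Icc ((0 : ℤ), (0 : ℤ)) ((i : ℤ), (j : ℤ)) := by
  have := hp.fst_pos; have := hp.snd_lt; have := hp.1; have := hp.2.1
  simp only [Finset.mem_Icc, Prod.le_def]
  omega

end InOpenTriangle

theorem mem_Icc_and_interior_iff {i j : ℕ} (hi : 0 < i) (hj : 0 < j) (p : ℤ × ℤ) :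
    p ∈ Finset.Icc ((0 : ℤ), (0 : ℤ)) ((i : ℤ), (j : ℤ)) ∧
      latticeToReal p ∈
        interior (convexHull ℝ {((0 : ℝ), (0 : ℝ)), ((i : ℝ), 0), ((i : ℝ), (j : ℝ))}) ↔
      InOpenTriangle i j p := by
  rw [interior_convexHull_triangle (Nat.cast_pos.2 hi) (Nat.cast_pos.2 hj)]
  simp only [Set.mem_ofPred_eq, latticeToReal]
  norm_cast
  exact ⟨fun h => h.2, fun h => ⟨h.mem_Icc, h⟩⟩

theorem origin_mem_vertices {i j : ℕ} (hi : 0 < i) {T : Finset (ℤ × ℤ)}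
    (hT : ∀ p ∈ T, InOpenTriangle i j p) :
    ((0 : ℤ), (0 : ℤ)) ∈ vertices latticeToReal (insert (0, 0) (insert ((i : ℤ), (j : ℤ)) T)) := by
  refine mem_vertices_of_notMem_convexHull (Finset.mem_insert_self _ _)
    (notMem_convexHull_of_forall_lt (-LinearMap.fst ℝ ℝ ℝ) ?_)
  rintro _ ⟨p, hp, rfl⟩
  obtain ⟨hp0, hp⟩ := Finset.mem_erase.1 hp
  simp only [LinearMap.neg_apply, LinearMap.fst_apply, latticeToReal, neg_lt_neg_iff]
  rcases Finset.mem_insert.1 hp with rfl | hp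
  · exact absurd rfl hp0
  rcases Finset.mem_insert.1 hp with rfl | hp
  · simpa using hi
  · exact_mod_cast (hT p hp).fst_pos

theorem corner_mem_vertices {i j : ℕ} (hi : 0 < i) {T : Finset (ℤ × ℤ)}
    (hT : ∀ p ∈ T, InOpenTriangle i j p) :
    ((i : ℤ), (j : ℤ)) ∈ vertices latticeToReal (insert (0, 0) (insert ((i : ℤ), (j : ℤ)) T)) := by
  refine mem_vertices_of_notMem_convexHull (Finset.mem_insert_of_mem (Finset.mem_insert_self _ _))
    (notMem_convexHull_of_forall_lt (LinearMap.fst ℝ ℝ ℝ + LinearMap.snd ℝ ℝ ℝ) ?_)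
  rintro _ ⟨p, hp, rfl⟩
  obtain ⟨hpij, hp⟩ := Finset.mem_erase.1 hp
  simp only [LinearMap.add_apply, LinearMap.fst_apply, LinearMap.snd_apply, latticeToReal]
  rcases Finset.mem_insert.1 hp with rfl | hp
  · simpa using add_pos_of_pos_of_nonneg (Nat.cast_pos.2 hi) (Nat.cast_nonneg (α := ℝ) j)
  rcases Finset.mem_insert.1 hp with rfl | hp
  · exact absurd rfl hpij
  · have := (hT p hp).2.1
    have := (hT p hp).snd_lt
    exact_mod_cast (by omega : p.1 + p.2 < i + j)

theorem origin_ne_corner {i j : ℕ} (hi : 0 < i) :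
    ((0 : ℤ), (0 : ℤ)) ≠ ((i : ℤ), (j : ℤ)) := by
  simp only [ne_eq, Prod.mk.injEq, not_and]
  omega

theorem insert_corners_subset_Icc {i j : ℕ} {T : Finset (ℤ × ℤ)}
    (hT : ∀ p ∈ T, InOpenTriangle i j p) :
    insert (0, 0) (insert ((i : ℤ), (j : ℤ)) T) ⊆ Finset.Icc (0, 0) ((i : ℤ), (j : ℤ)) := by
  have hcorner : ((0 : ℤ), (0 : ℤ)) ≤ ((i : ℤ), (j : ℤ)) := by simp [Prod.le_def]
  exact Finset.insert_subset (Finset.left_mem_Icc.2 hcorner) (Finset.insert_subset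
    (Finset.right_mem_Icc.2 hcorner) fun p hp => (hT p hp).mem_Icc)

/-- Vertex sets of the polygons of `C`: the corners `(0,0)` and `(i,j)` span the edge `L`, and
the other vertices are interior to `Δ`, so the polygon meets the legs of `Δ` only at the corners. -/
def IsAdmissiblePolygon (i j : ℕ) (V : Finset (ℤ × ℤ)) : Prop :=
  2 ≤ V.card ∧ ((0, 0) : ℤ × ℤ) ∈ V ∧ ((i : ℤ), (j : ℤ)) ∈ V ∧
    (∀ v ∈ V, latticeToReal v ∉ convexHull ℝ (latticeToReal '' ↑(V.erase v))) ∧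
    (∀ v ∈ V, v ≠ (0, 0) → v ≠ ((i : ℤ), (j : ℤ)) → InOpenTriangle i j v)

theorem isAdmissiblePolygon_vertices {i j : ℕ} (hi : 0 < i) {T : Finset (ℤ × ℤ)}
    (hT : ∀ p ∈ T, InOpenTriangle i j p) :
    IsAdmissiblePolygon i j
      (vertices latticeToReal (insert (0, 0) (insert ((i : ℤ), (j : ℤ)) T))) := by
  have h0 := origin_mem_vertices hi hT
  have hij := corner_mem_vertices hi hT
  refine ⟨?_, h0, hij, notMem_convexHull_image_vertices_erase latticeToReal_injective _, ?_⟩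
  · rw [← Finset.card_pair (origin_ne_corner hi)]
    exact Finset.card_le_card (Finset.insert_subset h0 (Finset.singleton_subset_iff.2 hij))
  · intro v hv hv0 hvij
    rcases Finset.mem_insert.1 (vertices_subset _ hv) with rfl | hv
    · exact absurd rfl hv0
    rcases Finset.mem_insert.1 hv with rfl | hv
    · exact absurd rfl hvij
    · exact hT v hv

namespace IsAdmissiblePolygon

variable {i j : ℕ} {Q : Finset (ℤ × ℤ)}

theorem corners_subset (hQ : IsAdmissiblePolygon i j Q) : {(0, 0), ((i : ℤ), (j : ℤ))} ⊆ Q :=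
  Finset.insert_subset hQ.2.1 (Finset.singleton_subset_iff.2 hQ.2.2.1)

theorem card_sdiff_corners (hi : 0 < i) (hQ : IsAdmissiblePolygon i j Q) :
    (Q \ {(0, 0), ((i : ℤ), (j : ℤ))}).card = Q.card - 2 := by
  rw [Finset.card_sdiff_of_subset hQ.corners_subset, Finset.card_pair (origin_ne_corner hi)]

theorem sdiff_corners_subset (hQ : IsAdmissiblePolygon i j Q) {U : Finset (ℤ × ℤ)}
    (hU : ∀ p, InOpenTriangle i j p → p ∈ U) :
    Q \ {(0, 0), ((i : ℤ), (j : ℤ))} ⊆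
      U.filter fun p => latticeToReal p ∈ convexHull ℝ (latticeToReal '' Q) := fun q hq => by
  obtain ⟨hqQ, hq⟩ := Finset.mem_sdiff.1 hq
  simp only [Finset.mem_insert, Finset.mem_singleton, not_or] at hq
  exact Finset.mem_filter.2 ⟨hU q (hQ.2.2.2.2 q hqQ hq.1 hq.2),
    subset_convexHull ℝ _ (Set.mem_image_of_mem _ hqQ)⟩

theorem convexHull_eq_iff (hQ : IsAdmissiblePolygon i j Q) {T U : Finset (ℤ × ℤ)} (hTU : T ⊆ U) :
    convexHull ℝ (latticeToReal '' ↑(insert (0, 0) (insert ((i : ℤ), (j : ℤ)) T))) =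
        convexHull ℝ (latticeToReal '' Q) ↔
      Q \ {(0, 0), ((i : ℤ), (j : ℤ))} ⊆ T ∧
        T ⊆ U.filter fun p => latticeToReal p ∈ convexHull ℝ (latticeToReal '' Q) := by
  have hQ0 := subset_convexHull ℝ _ (Set.mem_image_of_mem latticeToReal hQ.2.1)
  have hQij := subset_convexHull ℝ _ (Set.mem_image_of_mem latticeToReal hQ.2.2.1)
  rw [convexHull_image_eq_iff latticeToReal_injective hQ.2.2.2.1, sdiff_le_iff,
    Finset.sup_eq_union, Finset.insert_union, Finset.singleton_union]
  simp only [Finset.forall_mem_insert, hQ0, hQij, true_and, Finset.subset_iff, Finset.mem_filter]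
  exact and_congr_right fun _ => forall₂_congr fun p hp => (and_iff_right (hTU hp)).symm

end IsAdmissiblePolygon

/-- Probabilistic process: each lattice point interior to `Δ` is independently selected with
probability `x ∈ (0,1)`; the convex hull of the selected points together with `(0,0)` and `(i,j)`
is (the region of) an element of `C`, and for a given `Q ∈ C` the probability that the hull
equals `Q` is exactly `x^{v(Q)−2} (1−x)^{u(Q)}`.  Probabilities of events are expressed as sums
over the selected subsets `T` of the weight `x^{|T|}(1−x)^{|I|−|T|}`. -/
theorem stmt10 (i j : ℕ) (hi : 0 < i) (hj : 0 < j)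
    (coe : ℤ × ℤ → ℝ × ℝ) (hcoe : coe = fun p => ((p.1 : ℝ), (p.2 : ℝ)))
    (Δ : Set (ℝ × ℝ))
    (hΔ : Δ = convexHull ℝ {((0 : ℝ), (0 : ℝ)), ((i : ℝ), (0 : ℝ)), ((i : ℝ), (j : ℝ))})
    (C : Finset (Finset (ℤ × ℤ)))
    (hC : C = (Finset.Icc ((0 : ℤ), (0 : ℤ)) ((i : ℤ), (j : ℤ))).powerset.filter (fun V =>
      2 ≤ V.card ∧ ((0, 0) : ℤ × ℤ) ∈ V ∧ ((i : ℤ), (j : ℤ)) ∈ V ∧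
      (∀ v ∈ V, coe v ∉ convexHull ℝ (coe '' ((V.erase v : Finset (ℤ × ℤ)) : Set (ℤ × ℤ)))) ∧
      (∀ v ∈ V, v ≠ ((0, 0) : ℤ × ℤ) → v ≠ ((i : ℤ), (j : ℤ)) →
        0 < v.2 ∧ v.1 < (i : ℤ) ∧ (i : ℤ) * v.2 < (j : ℤ) * v.1)))
    (I : Finset (ℤ × ℤ))
    (hI : I = (Finset.Icc ((0 : ℤ), (0 : ℤ)) ((i : ℤ), (j : ℤ))).filter
      (fun p => coe p ∈ interior Δ)) :
    ∀ x : ℝ, 0 < x → x < 1 →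
      (∀ T ∈ I.powerset, ∃ V ∈ C,
        convexHull ℝ (coe '' ((insert ((0 : ℤ), (0 : ℤ)) (insert ((i : ℤ), (j : ℤ)) T)
            : Finset (ℤ × ℤ)) : Set (ℤ × ℤ)))
          = convexHull ℝ (coe '' ((V : Finset (ℤ × ℤ)) : Set (ℤ × ℤ)))) ∧
      (∀ Q ∈ C,
        (∑ T ∈ I.powerset.filter (fun T =>
            convexHull ℝ (coe '' ((insert ((0 : ℤ), (0 : ℤ)) (insert ((i : ℤ), (j : ℤ)) T)
                : Finset (ℤ × ℤ)) : Set (ℤ × ℤ)))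
              = convexHull ℝ (coe '' ((Q : Finset (ℤ × ℤ)) : Set (ℤ × ℤ)))),
          x ^ T.card * (1 - x) ^ (I.card - T.card))
        = x ^ (Q.card - 2) *
            (1 - x) ^ ((I.filter (fun p =>
              coe p ∉ convexHull ℝ (coe '' ((Q : Finset (ℤ × ℤ)) : Set (ℤ × ℤ))))).card)) := by
  intro x _ _
  obtain rfl : coe = latticeToReal := hcoe
  subst hΔ
  have hI' : ∀ p, p ∈ I ↔ InOpenTriangle i j p := fun p => by
    rw [hI, Finset.mem_filter, mem_Icc_and_interior_iff hi hj]
  have hC' : ∀ V, V ∈ C ↔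
      V ⊆ Finset.Icc (0, 0) ((i : ℤ), (j : ℤ)) ∧ IsAdmissiblePolygon i j V := fun V => by
    rw [hC, Finset.mem_filter, Finset.mem_powerset]
    rfl
  refine ⟨fun T hT => ?_, fun Q hQ => ?_⟩
  · have hT : ∀ p ∈ T, InOpenTriangle i j p := fun p hp => (hI' p).1 (Finset.mem_powerset.1 hT hp)
    exact ⟨_, (hC' _).2 ⟨(vertices_subset _).trans (insert_corners_subset_Icc hT),
      isAdmissiblePolygon_vertices hi hT⟩, (convexHull_image_vertices _).symm⟩
  · obtain ⟨-, hQ⟩ := (hC' Q).1 hQ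
    rw [Finset.filter_congr fun T hT => hQ.convexHull_eq_iff (Finset.mem_powerset.1 hT),
      Finset.sum_filter_powerset_subset_subset (hQ.sdiff_corners_subset fun p => (hI' p).2)
        (Finset.filter_subset _ _), hQ.card_sdiff_corners hi,
      ← Finset.card_filter_add_card_filter_not (s := I)
        (fun p => latticeToReal p ∈ convexHull ℝ (latticeToReal '' Q)), Nat.add_sub_cancel_left]
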